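/- arXiv:math/0607373 — 2 statements merged into one kernel-verified Lean document; each statement's English description precedes it below -/
import Mathlib

section
/- Let G be a group and β : Gⁿ → Gⁿ any map. Define F : G^{n+1} → G^{n+1} by F(X₁,…,Xₙ,X_{n+1}) = (β(X̂)₁,…,β(X̂)_{n−1}, β(X̂)ₙ · X_{n+1} · β(X̂)ₙ⁻¹, β(X̂)ₙ), where X̂ = (X₁,…,Xₙ). Then (X₁,…,X_{n+1}) is a fixed point of F if and only if X̂ is a fixed point of β and X_{n+1} = Xₙ. In particular, the map X̂ ↦ (X̂, Xₙ) is a bijection from Fix(β) onto Fix(F), so the fixed point set of the map induced by the Markov move of type II β ↦ σₙβ is naturally identified with the fixed point set of the map induced by β. -/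
/-- The self-map of `G^{n+2}` induced by the braid `σₙ·β ∈ B_{n+1}` obtained from
`β : G^{n+1} → G^{n+1}` by a Markov move of type II (`σₙ(xₙ) = xₙ x_{n+1} xₙ⁻¹`,
`σₙ(x_{n+1}) = xₙ`): with `X̂` the first `n+1` coordinates and `B = β X̂`, it sends `X` to
`(B₁, …, B_{n}, Bₙ₊₁ · X_{n+2} · Bₙ₊₁⁻¹, Bₙ₊₁)` (in `1`-based notation of the statement:
`(β(X̂)₁, …, β(X̂)_{n−1}, β(X̂)ₙ · X_{n+1} · β(X̂)ₙ⁻¹, β(X̂)ₙ)`). -/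
def markovII {G : Type*} [Group G] {n : ℕ}
    (β : (Fin (n + 1) → G) → (Fin (n + 1) → G)) (X : Fin (n + 2) → G) : Fin (n + 2) → G :=
  let B : Fin (n + 1) → G := β fun k => X k.castSucc
  Fin.snoc
    (Function.update B (Fin.last n)
      (B (Fin.last n) * X (Fin.last (n + 1)) * (B (Fin.last n))⁻¹))
    (B (Fin.last n))

/-- A tuple `(X₁,…,X_{n+1})` is a fixed point of the map induced by the Markov move of
type II `β ↦ σₙβ` if and only if `X̂ = (X₁,…,Xₙ)` is a fixed point of `β` and
`X_{n+1} = Xₙ`.  In particular `X̂ ↦ (X̂, Xₙ)` is a bijection from `Fix(β)` onto the fixed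
point set of the induced map. -/
theorem fixedPoints_markovII {G : Type*} [Group G] {n : ℕ}
    (β : (Fin (n + 1) → G) → (Fin (n + 1) → G)) :
    (∀ X : Fin (n + 2) → G,
      markovII β X = X ↔
        (β (fun k => X k.castSucc) = (fun k => X k.castSucc) ∧
          X (Fin.last (n + 1)) = X (Fin.last n).castSucc)) ∧
    Set.BijOn (fun Z : Fin (n + 1) → G => Fin.snoc Z (Z (Fin.last n)))
      (Function.fixedPoints β) (Function.fixedPoints (markovII β)) := by
  have key : ∀ X : Fin (n + 2) → G,
      markovII β X = X ↔
        (β (fun k => X k.castSucc) = (fun k => X k.castSucc) ∧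
          X (Fin.last (n + 1)) = X (Fin.last n).castSucc) := by
    intro X
    constructor
    · intro h
      set B := β (fun k => X k.castSucc) with hB
      have hlast : B (Fin.last n) = X (Fin.last (n + 1)) := by
        have := congrFun h (Fin.last (n + 1))
        simpa [markovII, -Fin.snoc_update] using this
      have hcast : ∀ k : Fin (n + 1),
          (Function.update B (Fin.last n)
            (B (Fin.last n) * X (Fin.last (n + 1)) * (B (Fin.last n))⁻¹)) k
            = X k.castSucc := by
        intro k
        have := congrFun h k.castSucc
        simpa [markovII, -Fin.snoc_update] using this
      have hlast2 : X (Fin.last (n + 1)) = X (Fin.last n).castSucc := by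
        have := hcast (Fin.last n)
        simpa [Function.update_self, hlast, mul_inv_cancel_right] using this
      refine ⟨?_, hlast2⟩
      funext k
      by_cases hk : k = Fin.last n
      · subst hk
        rw [hlast, hlast2]
      · have := hcast k
        rwa [Function.update_of_ne hk] at this
    · rintro ⟨h1, h2⟩
      have hBlast : (β fun k => X k.castSucc) (Fin.last n) = X (Fin.last n).castSucc := by
        rw [h1]
      funext j
      refine Fin.lastCases ?_ ?_ j
      · simp [markovII, -Fin.snoc_update, hBlast, h2]
      · intro i
        by_cases hi : i = Fin.last n
        · subst hi
          simp [markovII, -Fin.snoc_update, hBlast, h2, mul_inv_cancel_right]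
        · simp [markovII, -Fin.snoc_update, Function.update_of_ne hi, h1]
  refine ⟨key, ?_, ?_, ?_⟩
  · intro Z hZ
    have hZ' : β Z = Z := hZ
    show markovII β (Fin.snoc Z (Z (Fin.last n))) = _
    rw [key]
    constructor
    · have : (fun k : Fin (n + 1) =>
          (Fin.snoc Z (Z (Fin.last n)) : Fin (n + 2) → G) k.castSucc) = Z := by
        funext k; simp
      rw [this, hZ']
    · simp
  · intro Z _ W _ h
    funext k
    have := congrFun h k.castSucc
    simpa using this
  · intro X hX
    have hX' : markovII β X = X := hX
    rw [key] at hX'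
    obtain ⟨h1, h2⟩ := hX'
    refine ⟨fun k => X k.castSucc, h1, ?_⟩
    funext j
    refine Fin.lastCases ?_ ?_ j
    · simpa using h2.symm
    · intro i; simp
end

section
/- Let G be a group and β : Gⁿ → Gⁿ any map. Define F' : G^{n+1} → G^{n+1} by F'(X₁,…,Xₙ,X_{n+1}) = (β(X̂)₁,…,β(X̂)_{n−1}, X_{n+1}, X_{n+1}⁻¹ · β(X̂)ₙ · X_{n+1}), where X̂ = (X₁,…,Xₙ). Then (X₁,…,X_{n+1}) is a fixed point of F' if and only if X̂ is a fixed point of β and X_{n+1} = Xₙ. In particular, the fixed point set of the map induced by the Markov move β ↦ σₙ⁻¹β is naturally identified with the fixed point set of the map induced by β. -/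
/-- The self-map of `G^{n+2}` induced by the braid `σₙ⁻¹·β ∈ B_{n+1}` obtained from
`β : G^{n+1} → G^{n+1}` by the inverse Markov move of type II (`σₙ⁻¹(xₙ) = x_{n+1}`,
`σₙ⁻¹(x_{n+1}) = x_{n+1}⁻¹ xₙ x_{n+1}`): with `X̂` the first `n+1` coordinates and
`B = β X̂`, it sends `X` to (in `1`-based notation of the statement)
`(β(X̂)₁, …, β(X̂)_{n−1}, X_{n+1}, X_{n+1}⁻¹ · β(X̂)ₙ · X_{n+1})`. -/
def markovIIinv {G : Type*} [Group G] {n : ℕ}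
    (β : (Fin (n + 1) → G) → (Fin (n + 1) → G)) (X : Fin (n + 2) → G) : Fin (n + 2) → G :=
  let B : Fin (n + 1) → G := β fun k => X k.castSucc
  Fin.snoc
    (Function.update B (Fin.last n) (X (Fin.last (n + 1))))
    ((X (Fin.last (n + 1)))⁻¹ * B (Fin.last n) * X (Fin.last (n + 1)))

/-- A tuple `(X₁,…,X_{n+1})` is a fixed point of the map induced by the Markov move
`β ↦ σₙ⁻¹β` if and only if `X̂ = (X₁,…,Xₙ)` is a fixed point of `β` and `X_{n+1} = Xₙ`.
In particular `X̂ ↦ (X̂, Xₙ)` is a bijection from `Fix(β)` onto the fixed point set of the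
induced map. -/
theorem fixedPoints_markovIIinv {G : Type*} [Group G] {n : ℕ}
    (β : (Fin (n + 1) → G) → (Fin (n + 1) → G)) :
    (∀ X : Fin (n + 2) → G,
      markovIIinv β X = X ↔
        (β (fun k => X k.castSucc) = (fun k => X k.castSucc) ∧
          X (Fin.last (n + 1)) = X (Fin.last n).castSucc)) ∧
    Set.BijOn (fun Z : Fin (n + 1) → G => Fin.snoc Z (Z (Fin.last n)))
      (Function.fixedPoints β) (Function.fixedPoints (markovIIinv β)) := by
  have key : ∀ X : Fin (n + 2) → G,
      markovIIinv β X = X ↔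
        (β (fun k => X k.castSucc) = (fun k => X k.castSucc) ∧
          X (Fin.last (n + 1)) = X (Fin.last n).castSucc) := by
    intro X
    set B : Fin (n + 1) → G := β fun k => X k.castSucc with hB
    constructor
    · intro h
      have hcast : ∀ k : Fin (n + 1),
          Function.update B (Fin.last n) (X (Fin.last (n + 1))) k = X k.castSucc := by
        intro k
        have := congrFun h k.castSucc
        simpa only [markovIIinv, Fin.snoc_castSucc] using this
      have hlast : (X (Fin.last (n + 1)))⁻¹ * B (Fin.last n) * X (Fin.last (n + 1))
          = X (Fin.last (n + 1)) := by
        have := congrFun h (Fin.last (n + 1))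
        simpa only [markovIIinv, Fin.snoc_last] using this
      have hXeq : X (Fin.last (n + 1)) = X (Fin.last n).castSucc := by
        have := hcast (Fin.last n)
        rw [Function.update_self] at this
        exact this
      have hBlast : B (Fin.last n) = X (Fin.last (n + 1)) := by
        have h2 : B (Fin.last n) * X (Fin.last (n + 1))
            = X (Fin.last (n + 1)) * X (Fin.last (n + 1)) := by
          have := congrArg (fun g => X (Fin.last (n + 1)) * g) hlast
          simpa [mul_assoc] using this
        exact mul_right_cancel h2
      refine ⟨funext fun k => ?_, hXeq⟩
      rcases eq_or_ne k (Fin.last n) with rfl | hk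
      · show B (Fin.last n) = X (Fin.last n).castSucc
        rw [hBlast, hXeq]
      · have := hcast k
        rwa [Function.update_of_ne hk] at this
    · rintro ⟨hfix, hXeq⟩
      funext j
      refine Fin.lastCases ?_ ?_ j
      · have : B (Fin.last n) = X (Fin.last n).castSucc := congrFun hfix (Fin.last n)
        simp only [markovIIinv, ← hB, Fin.snoc_last, this, ← hXeq]
        group
      · intro k
        rcases eq_or_ne k (Fin.last n) with rfl | hk
        · simp only [markovIIinv, ← hB, Fin.snoc_castSucc, Function.update_self, ← hXeq]
        · have : B k = X k.castSucc := congrFun hfix k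
          simp only [markovIIinv, ← hB, Fin.snoc_castSucc, Function.update_of_ne hk, this]
  refine ⟨key, ?_, ?_, ?_⟩
  · intro Z hZ
    have hZ' : β Z = Z := hZ
    show markovIIinv β (Fin.snoc Z (Z (Fin.last n))) = _
    rw [key]
    constructor
    · have : (fun k : Fin (n+1) => (Fin.snoc Z (Z (Fin.last n)) : Fin (n+2) → G) k.castSucc) = Z := by
        funext k; simp [Fin.snoc_castSucc]
      rw [this, hZ']
    · simp [Fin.snoc_castSucc, Fin.snoc_last]
  · intro Z₁ _ Z₂ _ h
    funext k
    have := congrFun h k.castSucc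
    simpa [Fin.snoc_castSucc] using this
  · intro X hX
    have hX' := (key X).mp hX
    refine ⟨fun k => X k.castSucc, hX'.1, ?_⟩
    funext j
    refine Fin.lastCases ?_ ?_ j
    · simp [Fin.snoc_last, ← hX'.2]
    · intro k; simp [Fin.snoc_castSucc]
end
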